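/- arXiv:math/0201281 — 2 statements merged into one kernel-verified Lean document; each statement's English description precedes it below -/
import Mathlib

section
/- Let η be a symmetric invertible N×N real matrix with inverse (η_{ij}), and let Φ : U → ℝ be a C³ function on an open set U ⊆ ℝ^N. Define the 'potential' vector field h^i(v) = Σ_j η^{ij} ∂Φ/∂v^j. Then h satisfies the equations Σ_{s,r} η^{sr} (∂²h^j/∂v^s∂v^i)(∂²h^k/∂v^l∂v^r) = Σ_{s,r} η^{sr} (∂²h^k/∂v^s∂v^i)(∂²h^j/∂v^l∂v^r) for all i,j,k,l if and only if Φ satisfies the associativity (WDVV-type) equations Σ_{s,r} (∂³Φ/∂v^p∂v^s∂v^i) η^{sr} (∂³Φ/∂v^q∂v^l∂v^r) = Σ_{s,r} (∂³Φ/∂v^q∂v^s∂v^i) η^{sr} (∂³Φ/∂v^p∂v^l∂v^r) for all i,l,p,q at every point of U. -/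
/-!
Fix a point `v` and indices `i, l`, and let `A = (∂³Φ/∂v^p∂v^s∂v^i)_{ps}` and
`B = (∂³Φ/∂v^q∂v^l∂v^r)_{qr}`. The second derivatives of `h` entering (2.17) are the entries of
`ηA` and `ηB`, so (2.17) says that `η (A η Bᵀ) η` is symmetric, while the associativity
equations say that `A η Bᵀ` is symmetric. As `η` is symmetric and invertible, the two agree.
-/

open Matrix Filter Topology

noncomputable def pdv {N : ℕ} (f : (Fin N → ℝ) → ℝ) (i : Fin N) (v : Fin N → ℝ) : ℝ :=
  fderiv ℝ f v (Pi.single i 1)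

noncomputable def pdv2 {N : ℕ} (f : (Fin N → ℝ) → ℝ) (i j : Fin N) (v : Fin N → ℝ) : ℝ :=
  pdv (fun w => pdv f i w) j v

noncomputable def pdv3 {N : ℕ} (f : (Fin N → ℝ) → ℝ) (i j k : Fin N) (v : Fin N → ℝ) : ℝ :=
  pdv (fun w => pdv2 f i j w) k v

section Calculus

variable {N : ℕ} {f g : (Fin N → ℝ) → ℝ} {v : Fin N → ℝ}

theorem ContDiffAt.pdv {m n : WithTop ℕ∞} (hf : ContDiffAt ℝ n f v) (hmn : m + 1 ≤ n)
    (i : Fin N) : ContDiffAt ℝ m (pdv f i) v :=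
  (ContinuousLinearMap.apply ℝ ℝ (Pi.single i 1 : Fin N → ℝ)).contDiff.contDiffAt.comp v
    (hf.fderiv_right hmn)

theorem Filter.EventuallyEq.pdv_eq (hfg : f =ᶠ[𝓝 v] g) (i : Fin N) : pdv f i v = pdv g i v := by
  rw [pdv, pdv, hfg.fderiv_eq]

theorem pdv_sum_const_mul (c : Fin N → ℝ) (g : Fin N → (Fin N → ℝ) → ℝ)
    (hg : ∀ m, DifferentiableAt ℝ (g m) v) (i : Fin N) :
    pdv (fun w => ∑ m, c m * g m w) i v = ∑ m, c m * pdv (g m) i v := by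
  rw [pdv, fderiv_fun_sum fun m _ => (hg m).const_mul (c m)]
  simp [pdv, fderiv_const_mul (hg _)]

theorem pdv2_sum_const_mul_pdv {Φ : (Fin N → ℝ) → ℝ} (hΦ : ContDiffAt ℝ 3 Φ v)
    (c : Fin N → ℝ) (s i : Fin N) :
    pdv2 (fun w => ∑ m, c m * pdv Φ m w) s i v = ∑ m, c m * pdv3 Φ m s i v := by
  have hfirst : (fun w => pdv (fun w => ∑ m, c m * pdv Φ m w) s w) =ᶠ[𝓝 v]
      fun w => ∑ m, c m * pdv2 Φ m s w :=
    (hΦ.eventually (by simp)).mono fun w hw => pdv_sum_const_mul c _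
      (fun m => (hw.pdv (m := 2) (by norm_num) m).differentiableAt (by norm_num)) s
  rw [pdv2, hfirst.pdv_eq]
  exact pdv_sum_const_mul c _
    (fun m => ((hΦ.pdv (m := 2) (by norm_num) m).pdv (m := 1) (by norm_num) s).differentiableAt
      (by norm_num)) i

end Calculus

section Algebra

variable {n α : Type*} [Fintype n] [CommRing α]

theorem sum_sum_mul_mul_eq_mul_mul_transpose_apply (A η B : Matrix n n α) (p q : n) :
    ∑ s, ∑ r, A p s * η s r * B q r = (A * η * Bᵀ) p q := by
  simp only [mul_apply, transpose_apply, Finset.sum_mul]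
  rw [Finset.sum_comm]

variable [DecidableEq n] {η : Matrix n n α} [Invertible η]

theorem Matrix.isSymm_mul_mul_iff (hη : η.IsSymm) {M : Matrix n n α} :
    (η * M * η).IsSymm ↔ M.IsSymm := by
  have hu := isUnit_of_invertible η
  rw [IsSymm, IsSymm, transpose_mul, transpose_mul, hη.eq, ← Matrix.mul_assoc,
    hu.mul_left_inj, hu.mul_right_inj]

theorem forall_sum_sum_symm_iff (hη : η.IsSymm) (A B : Matrix n n α) :
    (∀ j k, ∑ s, ∑ r, η s r * (η * A) j s * (η * B) k r =
        ∑ s, ∑ r, η s r * (η * A) k s * (η * B) j r) ↔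
      ∀ p q, ∑ s, ∑ r, A p s * η s r * B q r = ∑ s, ∑ r, A q s * η s r * B p r := by
  have hconj : ∀ j k, ∑ s, ∑ r, η s r * (η * A) j s * (η * B) k r =
      (η * (A * η * Bᵀ) * η) j k := by
    intro j k
    simp_rw [mul_comm (η _ _) ((η * A) _ _), sum_sum_mul_mul_eq_mul_mul_transpose_apply,
      transpose_mul, hη.eq, Matrix.mul_assoc]
  simp only [hconj, sum_sum_mul_mul_eq_mul_mul_transpose_apply]
  rw [← forall_comm, ← IsSymm.ext_iff, ← forall_comm, ← IsSymm.ext_iff, isSymm_mul_mul_iff hη]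

end Algebra

/-- the potential vector field `h^i = Σ_j η^{ij} ∂Φ/∂v^j` satisfies
equations (2.17) iff `Φ` satisfies the associativity (WDVV-type) equations. -/
theorem stmt1 {N : ℕ} (η : Matrix (Fin N) (Fin N) ℝ) (hη : η.IsSymm) (hdet : IsUnit η.det)
    (U : Set (Fin N → ℝ)) (hU : IsOpen U)
    (Φ : (Fin N → ℝ) → ℝ) (hΦ : ContDiffOn ℝ 3 Φ U)
    (h : Fin N → (Fin N → ℝ) → ℝ)
    (hdef : ∀ i v, h i v = ∑ j, η i j * pdv Φ j v) :
    (∀ v ∈ U, ∀ i j k l : Fin N,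
        ∑ s, ∑ r, η s r * pdv2 (h j) s i v * pdv2 (h k) l r v =
        ∑ s, ∑ r, η s r * pdv2 (h k) s i v * pdv2 (h j) l r v)
      ↔ (∀ v ∈ U, ∀ i l p q : Fin N,
        ∑ s, ∑ r, pdv3 Φ p s i v * η s r * pdv3 Φ q l r v =
        ∑ s, ∑ r, pdv3 Φ q s i v * η s r * pdv3 Φ p l r v) := by
  obtain rfl : h = fun j w => ∑ m, η j m * pdv Φ m w := funext₂ hdef
  have := η.invertibleOfIsUnitDet hdet
  refine forall₂_congr fun v hv => ?_
  simp only [pdv2_sum_const_mul_pdv (hΦ.contDiffAt (hU.mem_nhds hv))]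
  have hslice : ∀ i l, _ := fun i l => forall_sum_sum_symm_iff hη
    (of fun p s => pdv3 Φ p s i v) (of fun q r => pdv3 Φ q l r v)
  exact ⟨fun H i l => (hslice i l).1 fun j k => H i j k l,
    fun H i j k l => (hslice i l).2 (H i l) j k⟩
end

section
/- Let η be a symmetric invertible N×N real matrix and suppose the C² vector field h = (h^1,…,h^N) : U → ℝ^N on an open set U ⊆ ℝ^N satisfies both compatibility equations: (i) Σ_{s,r} η^{sr} (∂²h^j/∂v^s∂v^i)(∂²h^k/∂v^l∂v^r) = Σ_{s,r} η^{sr} (∂²h^k/∂v^s∂v^i)(∂²h^j/∂v^l∂v^r) and (ii) Σ_{s,p,l} (η^{ip} ∂h^s/∂v^p + η^{sp} ∂h^i/∂v^p) η^{jl} ∂²h^r/∂v^l∂v^s = Σ_{s,p,l} (η^{jp} ∂h^s/∂v^p + η^{sp} ∂h^j/∂v^p) η^{il} ∂²h^r/∂v^l∂v^s. Then for every real constant λ, the shifted vector field h̃^i(v) = h^i(v) + (λ/2) v^i also satisfies (i) and (ii). -/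
open Matrix

/-!
Adding `(λ/2) v^i` to `h^i` leaves the second derivatives unchanged, so (i) survives verbatim,
and shifts the first-derivative matrix `A s p = ∂h^s/∂v^p` by `(λ/2) · 1`. Condition (ii) says that
`g (η H_r)ᵀ` is symmetric, where `g = η Aᵀ + A ηᵀ` and `H_r` is the Hessian of `h^r`; the shift
changes `g` by `λ η`, and hence `g (η H_r)ᵀ` by `λ η H_rᵀ ηᵀ`, which is symmetric because `η` and the
Hessian are.
-/

section PartialDerivatives

variable {N : ℕ} {f : (Fin N → ℝ) → ℝ} {v : Fin N → ℝ}

theorem pdv_add_const_mul_apply (hf : DifferentiableAt ℝ f v) (c : ℝ) (i p : Fin N) :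
    pdv (fun w => f w + c * w i) p v = pdv f p v + c * (Pi.single p 1 : Fin N → ℝ) i := by
  have hlin : HasFDerivAt (fun w : Fin N → ℝ => c * w i)
      (c • (ContinuousLinearMap.proj i : (Fin N → ℝ) →L[ℝ] ℝ)) v :=
    (hasFDerivAt_apply i v).const_mul c
  rw [pdv, pdv, (hf.hasFDerivAt.fun_add hlin).fderiv]
  simp

theorem pdv2_add_const_mul_apply (hf : ∀ᶠ w in nhds v, DifferentiableAt ℝ f w) (c : ℝ)
    (i a b : Fin N) : pdv2 (fun w => f w + c * w i) a b v = pdv2 f a b v := by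
  have hfirst : (fun w => pdv (fun w => f w + c * w i) a w) =ᶠ[nhds v]
      fun w => pdv f a w + c * (Pi.single a 1 : Fin N → ℝ) i := by
    filter_upwards [hf] with w hw using pdv_add_const_mul_apply hw c i a
  show fderiv ℝ (fun w => pdv _ a w) v _ = fderiv ℝ (fun w => pdv f a w) v _
  rw [hfirst.fderiv_eq, fderiv_add_const]

theorem pdv2_comm (hf : ContDiffAt ℝ 2 f v) (a b : Fin N) : pdv2 f a b v = pdv2 f b a v := by
  have hdf : DifferentiableAt ℝ (fderiv ℝ f) v :=
    (hf.fderiv_right (m := 1) le_rfl).differentiableAt one_ne_zero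
  have hsnd : ∀ a b : Fin N,
      pdv2 f a b v = fderiv ℝ (fderiv ℝ f) v (Pi.single b 1) (Pi.single a 1) := by
    intro a b
    simp only [pdv2, pdv]
    rw [fderiv_clm_apply hdf (differentiableAt_const _)]
    simp
  rw [hsnd, hsnd, (hf.isSymmSndFDerivAt (by simp)).eq]

end PartialDerivatives

section SecondCondition

variable {N : ℕ}

/-- Condition (ii) at a point, with `A s p = ∂h^s/∂v^p` and `H r l s = ∂²h^r/∂v^l∂v^s`. -/
def SecondCondition (η A : Matrix (Fin N) (Fin N) ℝ) (H : Fin N → Matrix (Fin N) (Fin N) ℝ) :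
    Prop :=
  ∀ i j r, ∑ s, ∑ p, ∑ l, (η i p * A s p + η s p * A i p) * (η j l * H r l s) =
    ∑ s, ∑ p, ∑ l, (η j p * A s p + η s p * A j p) * (η i l * H r l s)

theorem sum_eq_metric_mul_apply (η A H : Matrix (Fin N) (Fin N) ℝ) (i j : Fin N) :
    ∑ s, ∑ p, ∑ l, (η i p * A s p + η s p * A i p) * (η j l * H l s) =
      ((η * Aᵀ + A * ηᵀ) * (η * H)ᵀ) i j := by
  simp only [mul_apply, Matrix.add_apply, transpose_apply]
  refine Finset.sum_congr rfl fun s _ => ?_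
  rw [← Finset.sum_add_distrib, Finset.sum_mul]
  refine Finset.sum_congr rfl fun p _ => ?_
  rw [Finset.mul_sum]
  refine Finset.sum_congr rfl fun l _ => ?_
  ring

theorem secondCondition_iff {η A : Matrix (Fin N) (Fin N) ℝ}
    {H : Fin N → Matrix (Fin N) (Fin N) ℝ} :
    SecondCondition η A H ↔ ∀ r, ((η * Aᵀ + A * ηᵀ) * (η * H r)ᵀ).IsSymm := by
  simp only [SecondCondition, sum_eq_metric_mul_apply, IsSymm.ext_iff]
  exact ⟨fun h r i j => h j i r, fun h i j r => h r j i⟩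

theorem SecondCondition.add_smul_one {η A : Matrix (Fin N) (Fin N) ℝ}
    {H : Fin N → Matrix (Fin N) (Fin N) ℝ} (hη : η.IsSymm) (hH : ∀ r, (H r).IsSymm)
    (h : SecondCondition η A H) (c : ℝ) : SecondCondition η (A + c • 1) H := by
  rw [secondCondition_iff] at h ⊢
  intro r
  have hmetric : η * (A + c • 1)ᵀ + (A + c • 1) * ηᵀ = η * Aᵀ + A * ηᵀ + (2 * c) • η := by
    simp only [hη.eq, transpose_add, transpose_smul, transpose_one, Matrix.mul_add,
      Matrix.add_mul, Matrix.mul_smul, Matrix.smul_mul, Matrix.mul_one, Matrix.one_mul]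
    module
  have hshift : (η * (η * H r)ᵀ).IsSymm := by
    simp only [IsSymm, transpose_mul, (hH r).eq, hη.eq, Matrix.mul_assoc]
  rw [hmetric, Matrix.add_mul, Matrix.smul_mul]
  exact (h r).add (hshift.smul (2 * c))

end SecondCondition

theorem stmt3_general {N : ℕ} (η : Matrix (Fin N) (Fin N) ℝ) (hη : η.IsSymm)
    (U : Set (Fin N → ℝ)) (hU : IsOpen U)
    (h : Fin N → (Fin N → ℝ) → ℝ) (hh : ∀ i, ContDiffOn ℝ 2 (h i) U)
    (h217 : ∀ v ∈ U, ∀ i j k l : Fin N,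
        ∑ s, ∑ r, η s r * pdv2 (h j) s i v * pdv2 (h k) l r v =
        ∑ s, ∑ r, η s r * pdv2 (h k) s i v * pdv2 (h j) l r v)
    (h218 : ∀ v ∈ U, ∀ i j r : Fin N,
        ∑ s, ∑ p, ∑ l, (η i p * pdv (h s) p v + η s p * pdv (h i) p v) *
            (η j l * pdv2 (h r) l s v) =
        ∑ s, ∑ p, ∑ l, (η j p * pdv (h s) p v + η s p * pdv (h j) p v) *
            (η i l * pdv2 (h r) l s v))
    (lam : ℝ)
    (ht : Fin N → (Fin N → ℝ) → ℝ)
    (htdef : ∀ i v, ht i v = h i v + (lam / 2) * v i) :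
    (∀ v ∈ U, ∀ i j k l : Fin N,
        ∑ s, ∑ r, η s r * pdv2 (ht j) s i v * pdv2 (ht k) l r v =
        ∑ s, ∑ r, η s r * pdv2 (ht k) s i v * pdv2 (ht j) l r v) ∧
    (∀ v ∈ U, ∀ i j r : Fin N,
        ∑ s, ∑ p, ∑ l, (η i p * pdv (ht s) p v + η s p * pdv (ht i) p v) *
            (η j l * pdv2 (ht r) l s v) =
        ∑ s, ∑ p, ∑ l, (η j p * pdv (ht s) p v + η s p * pdv (ht j) p v) *
            (η i l * pdv2 (ht r) l s v)) := by
  have hht : ∀ i, ht i = fun w => h i w + lam / 2 * w i := fun i => funext (htdef i)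
  have hC2 : ∀ v ∈ U, ∀ i, ContDiffAt ℝ 2 (h i) v :=
    fun v hv i => (hh i).contDiffAt (hU.mem_nhds hv)
  have hdiff : ∀ v ∈ U, ∀ i, DifferentiableAt ℝ (h i) v :=
    fun v hv i => (hC2 v hv i).differentiableAt two_ne_zero
  have hpdv2 : ∀ v ∈ U, ∀ r a b, pdv2 (ht r) a b v = pdv2 (h r) a b v := fun v hv r a b => by
    rw [hht]
    exact pdv2_add_const_mul_apply (Filter.eventually_of_mem (hU.mem_nhds hv)
      fun w hw => hdiff w hw r) _ r a b
  refine ⟨fun v hv i j k l => ?_, fun v hv => ?_⟩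
  · simpa only [hpdv2 v hv] using h217 v hv i j k l
  · have hA :
        of (fun s p => pdv (ht s) p v) = of (fun s p => pdv (h s) p v) + (lam / 2) • 1 := by
      ext s p
      rw [of_apply, hht, pdv_add_const_mul_apply (hdiff v hv s)]
      simp [one_apply, Pi.single_apply]
    have hH : (fun r => of fun l s => pdv2 (ht r) l s v) =
        fun r => of fun l s => pdv2 (h r) l s v :=
      funext fun r => by ext l s; exact hpdv2 v hv r l s
    show SecondCondition η (of fun s p => pdv (ht s) p v)
      (fun r => of fun l s => pdv2 (ht r) l s v)
    rw [hA, hH]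
    exact SecondCondition.add_smul_one hη
      (fun r => IsSymm.ext fun l s => pdv2_comm (hC2 v hv r) s l) (h218 v hv) _

/-- if `h` satisfies conditions (2.17) and (2.18) on `U`, then so does
the shifted vector field `h̃^i(v) = h^i(v) + (λ/2) v^i`. -/
theorem stmt3 {N : ℕ} (η : Matrix (Fin N) (Fin N) ℝ) (hη : η.IsSymm) (hdet : IsUnit η.det)
    (U : Set (Fin N → ℝ)) (hU : IsOpen U)
    (h : Fin N → (Fin N → ℝ) → ℝ) (hh : ∀ i, ContDiffOn ℝ 2 (h i) U)
    (h217 : ∀ v ∈ U, ∀ i j k l : Fin N,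
        ∑ s, ∑ r, η s r * pdv2 (h j) s i v * pdv2 (h k) l r v =
        ∑ s, ∑ r, η s r * pdv2 (h k) s i v * pdv2 (h j) l r v)
    (h218 : ∀ v ∈ U, ∀ i j r : Fin N,
        ∑ s, ∑ p, ∑ l, (η i p * pdv (h s) p v + η s p * pdv (h i) p v) *
            (η j l * pdv2 (h r) l s v) =
        ∑ s, ∑ p, ∑ l, (η j p * pdv (h s) p v + η s p * pdv (h j) p v) *
            (η i l * pdv2 (h r) l s v))
    (lam : ℝ)
    (ht : Fin N → (Fin N → ℝ) → ℝ)
    (htdef : ∀ i v, ht i v = h i v + (lam / 2) * v i) :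
    (∀ v ∈ U, ∀ i j k l : Fin N,
        ∑ s, ∑ r, η s r * pdv2 (ht j) s i v * pdv2 (ht k) l r v =
        ∑ s, ∑ r, η s r * pdv2 (ht k) s i v * pdv2 (ht j) l r v) ∧
    (∀ v ∈ U, ∀ i j r : Fin N,
        ∑ s, ∑ p, ∑ l, (η i p * pdv (ht s) p v + η s p * pdv (ht i) p v) *
            (η j l * pdv2 (ht r) l s v) =
        ∑ s, ∑ p, ∑ l, (η j p * pdv (ht s) p v + η s p * pdv (ht j) p v) *
            (η i l * pdv2 (ht r) l s v)) :=
  stmt3_general η hη U hU h hh h217 h218 lam ht htdef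
end
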